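/- Consider the exploration process of Definition 4.2 building the forest W: at each step ℓ the tail e_ℓ with maximal weight ŵ(e_ℓ) is chosen, weights multiply by reciprocals of out-degrees along paths, each leaf of the forest at step ℓ has weight at least ŵ(e_ℓ), the weights of the leaves of any weighted forest rooted in a set of roots sum to at most 1, and each root-to-leaf path has length at most r. Then ŵ(e_ℓ) ≤ r/ℓ for all ℓ before the termination time. Consequently, if the process only continues tails of weight at least ŵ_min, the total number of revealed edges κ satisfies κ − 1 ≤ r/ŵ_min. -/
import Mathlib


/-- Abstract version of Lemma 4.4: if a non-increasing sequence of positive weights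
`ŵ(e_1) ≥ ŵ(e_2) ≥ ...` satisfies `|F_ℓ| · ŵ(e_ℓ) ≤ 1` and `ℓ ≤ r · |F_ℓ|` for all
`ℓ < κ`, then `ŵ(e_ℓ) ≤ r / ℓ` for `1 ≤ ℓ < κ`; consequently if additionally
`ŵ(e_{κ-1}) ≥ ŵ_min > 0` then `κ − 1 ≤ r / ŵ_min`. -/
theorem stmt_9 (w : ℕ → ℝ) (F : ℕ → ℕ) (r : ℝ) (hr : 0 < r) (κ : ℕ) (hκ : 1 ≤ κ)
    (hwpos : ∀ ℓ, ℓ < κ → 0 < w ℓ)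
    (hwmono : ∀ ℓ ℓ', ℓ ≤ ℓ' → ℓ' < κ → w ℓ' ≤ w ℓ)
    (hleaf : ∀ ℓ, ℓ < κ → (F ℓ : ℝ) * w ℓ ≤ 1)
    (hdepth : ∀ ℓ, ℓ < κ → (ℓ : ℝ) ≤ r * F ℓ) :
    (∀ ℓ, 1 ≤ ℓ → ℓ < κ → w ℓ ≤ r / ℓ)
    ∧ (∀ wmin : ℝ, 0 < wmin → wmin ≤ w (κ - 1) → (κ : ℝ) - 1 ≤ r / wmin) := by
  have main : ∀ ℓ, 1 ≤ ℓ → ℓ < κ → w ℓ ≤ r / ℓ := by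
    intro ℓ h1 h2
    have hw := hwpos ℓ h2
    have hℓpos : (0:ℝ) < ℓ := by exact_mod_cast h1
    rw [le_div_iff₀ hℓpos]
    have h3 : (ℓ : ℝ) * w ℓ ≤ r * F ℓ * w ℓ :=
      mul_le_mul_of_nonneg_right (hdepth ℓ h2) hw.le
    have h4 : r * F ℓ * w ℓ ≤ r * 1 := by
      rw [mul_assoc]
      exact mul_le_mul_of_nonneg_left (hleaf ℓ h2) hr.le
    nlinarith
  refine ⟨main, fun wmin hwmin hle => ?_⟩
  rcases eq_or_lt_of_le hκ with h | h
  · rw [← h]; norm_num; positivity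
  · have h1 : 1 ≤ κ - 1 := by omega
    have h2 : κ - 1 < κ := by omega
    have hm := main (κ - 1) h1 h2
    have hlt : (0:ℝ) < ((κ - 1 : ℕ) : ℝ) := by exact_mod_cast h1
    have hw : wmin ≤ r / ((κ - 1 : ℕ) : ℝ) := hle.trans hm
    have hcast : ((κ:ℝ) - 1) = ((κ - 1 : ℕ) : ℝ) := by
      push_cast [Nat.cast_sub hκ]; ring
    rw [hcast, le_div_iff₀ hwmin]
    rw [le_div_iff₀ hlt] at hw
    nlinarith
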